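/- arXiv:1910.14018 — 2 statements merged into one kernel-verified Lean document; each statement's English description precedes it below -/
import Mathlib

section
/- Let -1 < a < 1 and b ∈ ℝ, and define the Abbe value of the ARMA(1,1) process as A(a,b) = 1 - a + b(a² - 1)/(1 + 2ab + b²). Then 0 < A(a,b) < 2. -/
/-!
Write `q c x = 1 + c x + x²`; it is positive for `|c| < 2` since its discriminant `c² - 4` is
negative. The denominator is `q (2a) b`, and clearing it factors the two gaps as
`A = (1 - a) q (a - 1) b / q (2a) b` and `2 - A = (1 + a) q (a + 1) b / q (2a) b`,
where `|2a|`, `|a - 1|`, `|a + 1|` are all below `2` when `|a| < 1`.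
-/

theorem one_add_mul_add_sq_pos {c : ℝ} (hc : |c| < 2) (x : ℝ) : 0 < 1 + c * x + x ^ 2 := by
  have hc2 : c ^ 2 < 4 := by nlinarith [sq_abs c, abs_nonneg c]
  nlinarith [sq_nonneg (2 * x + c)]

theorem arma_abbe_eq_div {a b : ℝ} (hD : 1 + 2 * a * b + b ^ 2 ≠ 0) :
    1 - a + b * (a ^ 2 - 1) / (1 + 2 * a * b + b ^ 2)
      = (1 - a) * (1 + (a - 1) * b + b ^ 2) / (1 + 2 * a * b + b ^ 2) := by
  rw [eq_div_iff hD, add_mul, div_mul_cancel₀ _ hD]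
  ring

theorem two_sub_arma_abbe_eq_div {a b : ℝ} (hD : 1 + 2 * a * b + b ^ 2 ≠ 0) :
    2 - (1 - a + b * (a ^ 2 - 1) / (1 + 2 * a * b + b ^ 2))
      = (1 + a) * (1 + (a + 1) * b + b ^ 2) / (1 + 2 * a * b + b ^ 2) := by
  rw [eq_div_iff hD, sub_mul, add_mul, div_mul_cancel₀ _ hD]
  ring

/-- The Abbe value of the ARMA(1,1) process lies strictly between 0 and 2. -/
theorem arma_abbe_bounds (a b : ℝ) (ha1 : -1 < a) (ha2 : a < 1)
    (A : ℝ) (hA : A = 1 - a + b * (a ^ 2 - 1) / (1 + 2 * a * b + b ^ 2)) :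
    0 < A ∧ A < 2 := by
  have hD : 0 < 1 + 2 * a * b + b ^ 2 := by
    simpa [mul_assoc] using
      one_add_mul_add_sq_pos (c := 2 * a) (abs_lt.2 ⟨by linarith, by linarith⟩) b
  have hlow : 0 < 1 + (a - 1) * b + b ^ 2 :=
    one_add_mul_add_sq_pos (abs_lt.2 ⟨by linarith, by linarith⟩) b
  have hhigh : 0 < 1 + (a + 1) * b + b ^ 2 :=
    one_add_mul_add_sq_pos (abs_lt.2 ⟨by linarith, by linarith⟩) b
  subst hA
  constructor
  · rw [arma_abbe_eq_div hD.ne']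
    exact div_pos (mul_pos (by linarith) hlow) hD
  · rw [← sub_pos, two_sub_arma_abbe_eq_div hD.ne']
    exact div_pos (mul_pos (by linarith) hhigh) hD
end

section
/- For all real b₁, b₂, the MA(2) Abbe value A(b₁,b₂) = 1 - b₁(b₂+1)/(1 + b₁² + b₂²) satisfies 1 - 1/√2 ≤ A(b₁,b₂) ≤ 1 + 1/√2; the minimum is attained at (b₁,b₂) = (√2, 1) and the maximum at (b₁,b₂) = (-√2, 1). Equivalently, |b₁(b₂+1)| ≤ (1 + b₁² + b₂²)/√2 for all real b₁, b₂. -/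
/-! Writing `c = b₂ + 1`, we have `1 + b₂² ≥ c²/2`, and AM–GM gives
`b₁² + c²/2 ≥ √2 |b₁ c|`; hence `√2 |b₁ (b₂ + 1)| ≤ 1 + b₁² + b₂²`, with equality
exactly when `b₂ = 1` and `|b₁| = √2`. -/

open Real

lemma sq_add_one_le_two_mul_one_add_sq (b : ℝ) : (b + 1) ^ 2 ≤ 2 * (1 + b ^ 2) := by
  nlinarith [sq_nonneg (b - 1)]

lemma sqrt_two_mul_abs_mul_le (x y : ℝ) : √2 * |x * y| ≤ x ^ 2 + y ^ 2 / 2 := by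
  have hsq : √2 ^ 2 = 2 := sq_sqrt zero_le_two
  rw [abs_mul, ← sq_abs x, ← sq_abs y]
  nlinarith [sq_nonneg (√2 * |x| - |y|)]

lemma abs_mul_add_one_le (b₁ b₂ : ℝ) :
    |b₁ * (b₂ + 1)| ≤ (1 + b₁ ^ 2 + b₂ ^ 2) / √2 := by
  rw [le_div_iff₀ (by positivity), mul_comm]
  nlinarith [sqrt_two_mul_abs_mul_le b₁ (b₂ + 1), sq_add_one_le_two_mul_one_add_sq b₂]

lemma abs_mul_add_one_div_le (b₁ b₂ : ℝ) :
    |b₁ * (b₂ + 1) / (1 + b₁ ^ 2 + b₂ ^ 2)| ≤ 1 / √2 := by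
  have hpos : 0 < 1 + b₁ ^ 2 + b₂ ^ 2 := by positivity
  rw [abs_div, abs_of_pos hpos, div_le_iff₀ hpos, one_div, inv_mul_eq_div]
  exact abs_mul_add_one_le b₁ b₂

lemma sqrt_two_mul_two_div_eq : √2 * (1 + 1) / (1 + √2 ^ 2 + 1 ^ 2) = 1 / √2 := by
  have hsq : √2 ^ 2 = 2 := sq_sqrt zero_le_two
  rw [hsq, div_eq_div_iff (by norm_num) (by positivity)]
  linear_combination 2 * hsq

/-- The MA(2) Abbe value `A(b₁,b₂) = 1 - b₁(b₂+1)/(1+b₁²+b₂²)` lies in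
`[1 - 1/√2, 1 + 1/√2]`, with extrema at `(±√2, 1)`; equivalently
`|b₁(b₂+1)| ≤ (1+b₁²+b₂²)/√2`. -/
theorem ma2_abbe_bounds (A : ℝ → ℝ → ℝ)
    (hA : ∀ b₁ b₂ : ℝ, A b₁ b₂ = 1 - b₁ * (b₂ + 1) / (1 + b₁ ^ 2 + b₂ ^ 2)) :
    (∀ b₁ b₂ : ℝ, 1 - 1 / Real.sqrt 2 ≤ A b₁ b₂ ∧ A b₁ b₂ ≤ 1 + 1 / Real.sqrt 2) ∧
      A (Real.sqrt 2) 1 = 1 - 1 / Real.sqrt 2 ∧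
      A (-Real.sqrt 2) 1 = 1 + 1 / Real.sqrt 2 ∧
      (∀ b₁ b₂ : ℝ, |b₁ * (b₂ + 1)| ≤ (1 + b₁ ^ 2 + b₂ ^ 2) / Real.sqrt 2) := by
  refine ⟨fun b₁ b₂ => ?_, ?_, ?_, abs_mul_add_one_le⟩
  · obtain ⟨hlow, hhigh⟩ := abs_le.mp (abs_mul_add_one_div_le b₁ b₂)
    rw [hA]
    constructor <;> linarith
  · rw [hA, sqrt_two_mul_two_div_eq]
  · rw [hA, neg_sq, neg_mul, neg_div, sqrt_two_mul_two_div_eq, sub_neg_eq_add]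
end
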